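/- Gronwall-type moment bound: let y : [0,∞) → [0,∞) be differentiable with y(0) = 0 and y'(t) ≤ a·(1 + y(t))^{1 - 1/k} + b·Σ_{l=1}^{k} c^{l/k}·(1 + y(t))^{1 - l/k} for constants a, b, c ≥ 0 and integer k ≥ 1. Then y(t)^{1/k} ≤ C + C·t·(a + b·(c^{1/k} + c)) for some universal constant C depending only on k. -/

import Mathlib

open Real

/-!
Each term `c^{l/k} (1 + y)^{1 - l/k}` of the sum is at most `(c^{1/k} + c) (1 + y)^{1 - 1/k}`,
so `y' ≤ M (1 + y)^{1 - 1/k}` with `M = a + b k (c^{1/k} + c)`. Then `(1 + y)^{1/k}` has derivative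
`(1/k) y' (1 + y)^{1/k - 1} ≤ M / k`, hence `y(t)^{1/k} ≤ (1 + y(t))^{1/k} ≤ 1 + t M / k`,
and `C = 1` works.
-/

theorem rpow_le_rpow_add_self {c p q : ℝ} (hc : 0 ≤ c) (hq : 0 ≤ q) (hqp : q ≤ p) (hp : p ≤ 1) :
    c ^ p ≤ c ^ q + c := by
  rcases le_total c 1 with hc1 | hc1
  · linarith [rpow_le_rpow_of_exponent_ge' hc hc1 hq hqp]
  · calc c ^ p ≤ c ^ (1 : ℝ) := rpow_le_rpow_of_exponent_le hc1 hp
      _ ≤ c ^ q + c := by rw [rpow_one]; linarith [rpow_nonneg hc q]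

theorem sum_Icc_rpow_mul_rpow_le {c w : ℝ} (hc : 0 ≤ c) (hw : 1 ≤ w) (k : ℕ) :
    ∑ l ∈ Finset.Icc 1 k, c ^ ((l : ℝ) / k) * w ^ ((1 : ℝ) - (l : ℝ) / k)
      ≤ k * ((c ^ ((1 : ℝ) / k) + c) * w ^ ((1 : ℝ) - 1 / k)) := by
  have hterm : ∀ l ∈ Finset.Icc 1 k, c ^ ((l : ℝ) / k) * w ^ ((1 : ℝ) - (l : ℝ) / k)
      ≤ (c ^ ((1 : ℝ) / k) + c) * w ^ ((1 : ℝ) - 1 / k) := by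
    intro l hl
    obtain ⟨hl1, hlk⟩ := Finset.mem_Icc.mp hl
    have hexp : (1 : ℝ) / k ≤ l / k := by gcongr; exact_mod_cast hl1
    gcongr
    exact rpow_le_rpow_add_self hc (by positivity) hexp
      (div_le_one_of_le₀ (by exact_mod_cast hlk) k.cast_nonneg)
  simpa using Finset.sum_le_card_nsmul _ _ _ hterm

theorem rpow_sub_rpow_le_of_hasDerivAt_le {z z' : ℝ → ℝ} {M r : ℝ} (hr : 0 ≤ r)
    (hz : ∀ t, 0 ≤ t → 0 < z t) (hder : ∀ t, 0 ≤ t → HasDerivAt z (z' t) t)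
    (hbound : ∀ t, 0 ≤ t → z' t ≤ M * z t ^ (1 - r)) {t : ℝ} (ht : 0 ≤ t) :
    z t ^ r - z 0 ^ r ≤ r * M * t := by
  have hderiv : ∀ s, 0 ≤ s →
      HasDerivAt (fun u ↦ z u ^ r) (z' s * r * z s ^ (r - 1)) s := fun s hs ↦
    (hder s hs).rpow_const (Or.inl (hz s hs).ne')
  have hderiv_le : ∀ s, 0 ≤ s → z' s * r * z s ^ (r - 1) ≤ r * M := by
    intro s hs
    have hzs := hz s hs
    calc z' s * r * z s ^ (r - 1) ≤ M * z s ^ (1 - r) * r * z s ^ (r - 1) := by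
          gcongr; exact hbound s hs
      _ = r * M * (z s ^ (1 - r) * z s ^ (r - 1)) := by ring
      _ = r * M := by rw [← rpow_add hzs]; norm_num
  have := (convex_Ici (0 : ℝ)).image_sub_le_mul_sub_of_deriv_le
    (fun s hs ↦ (hderiv s hs).continuousAt.continuousWithinAt)
    (fun s hs ↦ (hderiv s (interior_subset hs)).differentiableAt.differentiableWithinAt)
    (fun s hs ↦ (hderiv s (interior_subset hs)).deriv ▸ hderiv_le s (interior_subset hs))
    0 Set.self_mem_Ici t ht ht
  simpa using this

theorem gronwall_moment_bound_general (k : ℕ) :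
    ∃ C : ℝ, 0 < C ∧
      ∀ (a b c : ℝ), 0 ≤ a → 0 ≤ b → 0 ≤ c →
      ∀ (y y' : ℝ → ℝ),
        (∀ t, 0 ≤ t → 0 ≤ y t) → y 0 = 0 →
        (∀ t, 0 ≤ t → HasDerivAt y (y' t) t) →
        (∀ t, 0 ≤ t →
          y' t ≤ a * (1 + y t) ^ ((1 : ℝ) - 1 / k)
            + b * ∑ l ∈ Finset.Icc 1 k,
                c ^ ((l : ℝ) / k) * (1 + y t) ^ ((1 : ℝ) - (l : ℝ) / k)) →
        ∀ t, 0 ≤ t →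
          (y t) ^ ((1 : ℝ) / k) ≤ C + C * t * (a + b * (c ^ ((1 : ℝ) / k) + c)) := by
  refine ⟨1, one_pos, fun a b c ha hb hc y y' hy hy0 hder hineq t ht ↦ ?_⟩
  set X := c ^ ((1 : ℝ) / k) + c
  have hX : 0 ≤ X := by positivity
  have hbound : ∀ s, 0 ≤ s → y' s ≤ (a + b * k * X) * (1 + y s) ^ (1 - (1 : ℝ) / k) := by
    intro s hs
    have hsum := sum_Icc_rpow_mul_rpow_le hc (le_add_of_nonneg_right (hy s hs)) k
    calc y' s ≤ _ := hineq s hs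
      _ ≤ a * (1 + y s) ^ ((1 : ℝ) - 1 / k) + b * (k * (X * (1 + y s) ^ ((1 : ℝ) - 1 / k))) := by
          gcongr
      _ = _ := by ring
  have hgrowth := rpow_sub_rpow_le_of_hasDerivAt_le (z := fun s ↦ 1 + y s) (by positivity)
    (fun s hs ↦ by linarith [hy s hs]) (fun s hs ↦ (hder s hs).const_add 1) hbound ht
  have hrate : 1 / (k : ℝ) * (a + b * k * X) ≤ a + b * X := by
    have hinv : 1 / (k : ℝ) ≤ 1 := by simpa using k.cast_inv_le_one
    have hk : 1 / (k : ℝ) * k ≤ 1 := by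
      rcases k.eq_zero_or_pos with rfl | hk
      · simp
      · rw [one_div_mul_cancel (by positivity)]
    nlinarith [mul_nonneg hb hX]
  calc y t ^ ((1 : ℝ) / k) ≤ (1 + y t) ^ ((1 : ℝ) / k) := by
        gcongr <;> linarith [hy t ht]
    _ ≤ 1 + 1 / (k : ℝ) * (a + b * k * X) * t := by
        rw [hy0, add_zero, one_rpow] at hgrowth; linarith
    _ ≤ 1 + 1 * t * (a + b * X) := by nlinarith

/-- Gronwall-type moment bound: for every `k ≥ 1` there is a constant `C > 0` (depending
only on `k`) such that any nonnegative differentiable `y` with `y 0 = 0` satisfying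
`y' t ≤ a (1 + y t)^{1 - 1/k} + b Σ_{l=1}^k c^{l/k} (1 + y t)^{1 - l/k}` on `[0,∞)`
satisfies `(y t)^{1/k} ≤ C + C t (a + b (c^{1/k} + c))`. -/
theorem gronwall_moment_bound (k : ℕ) (hk : 1 ≤ k) :
    ∃ C : ℝ, 0 < C ∧
      ∀ (a b c : ℝ), 0 ≤ a → 0 ≤ b → 0 ≤ c →
      ∀ (y y' : ℝ → ℝ),
        (∀ t, 0 ≤ t → 0 ≤ y t) → y 0 = 0 →
        (∀ t, 0 ≤ t → HasDerivAt y (y' t) t) →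
        (∀ t, 0 ≤ t →
          y' t ≤ a * (1 + y t) ^ ((1 : ℝ) - 1 / k)
            + b * ∑ l ∈ Finset.Icc 1 k,
                c ^ ((l : ℝ) / k) * (1 + y t) ^ ((1 : ℝ) - (l : ℝ) / k)) →
        ∀ t, 0 ≤ t →
          (y t) ^ ((1 : ℝ) / k) ≤ C + C * t * (a + b * (c ^ ((1 : ℝ) / k) + c)) :=
  gronwall_moment_bound_general k
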